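/- arXiv:math/0305156 — 2 statements merged into one kernel-verified Lean document; each statement's English description precedes it below -/
import Mathlib

section
/- Let k ≥ 1 and let 𝒫 be a partition of {1,…,k}. Then the mixed braid group B_𝒫 ⊆ B_k can be generated by at most k(k−1)/2 elements: there exists a subset S of B_𝒫 with |S| ≤ k(k−1)/2 whose generated subgroup equals B_𝒫. -/
/-- The braid relations on `n` strands. Generators are indexed by `Fin (n-1)`,
with index `i` representing the Artin generator `σ_{i+1}`. -/
def braidRels (n : ℕ) : Set (FreeGroup (Fin (n - 1))) :=
  { r | (∃ i j : Fin (n - 1), (i : ℕ) + 1 = (j : ℕ) ∧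
          r = FreeGroup.of i * FreeGroup.of j * FreeGroup.of i *
              (FreeGroup.of j * FreeGroup.of i * FreeGroup.of j)⁻¹) ∨
        (∃ i j : Fin (n - 1), (i : ℕ) + 2 ≤ (j : ℕ) ∧
          r = FreeGroup.of i * FreeGroup.of j * (FreeGroup.of j * FreeGroup.of i)⁻¹) }

/-- The Artin braid group on `n` strands. -/
def BraidGroup (n : ℕ) : Type := PresentedGroup (braidRels n)

instance (n : ℕ) : Group (BraidGroup n) :=
  inferInstanceAs (Group (PresentedGroup (braidRels n)))

/-- `braidGen n i` is the Artin generator `σ_i ∈ B_n`, for `1 ≤ i ≤ n-1`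
(junk value `1` outside this range). -/
def braidGen (n : ℕ) (i : ℕ) : BraidGroup n :=
  if h : i - 1 < n - 1 then PresentedGroup.of (⟨i - 1, h⟩ : Fin (n - 1)) else 1

private lemma swap_braid {α : Type*} [DecidableEq α] {a b c : α}
    (hab : a ≠ b) (hac : a ≠ c) (hbc : b ≠ c) :
    Equiv.swap a b * Equiv.swap b c * Equiv.swap a b =
      Equiv.swap b c * Equiv.swap a b * Equiv.swap b c :=
  calc Equiv.swap a b * Equiv.swap b c * Equiv.swap a b
      = Equiv.swap b a * Equiv.swap c b * Equiv.swap b a := by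
        rw [Equiv.swap_comm a b, Equiv.swap_comm b c]
    _ = Equiv.swap a c := Equiv.swap_mul_swap_mul_swap hbc.symm hac.symm
    _ = Equiv.swap c a := Equiv.swap_comm a c
    _ = Equiv.swap b c * Equiv.swap a b * Equiv.swap b c :=
        (Equiv.swap_mul_swap_mul_swap hab hac).symm

private lemma swap_commute {α : Type*} [DecidableEq α] {a b c d : α}
    (h1 : a ≠ c) (h2 : a ≠ d) (h3 : b ≠ c) (h4 : b ≠ d) :
    Commute (Equiv.swap a b) (Equiv.swap c d) := by
  apply Equiv.Perm.Disjoint.commute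
  intro x
  by_cases hx : x = a ∨ x = b
  · right
    rcases hx with rfl | rfl
    · exact Equiv.swap_apply_of_ne_of_ne h1 h2
    · exact Equiv.swap_apply_of_ne_of_ne h3 h4
  · left
    push_neg at hx
    exact Equiv.swap_apply_of_ne_of_ne hx.1 hx.2

/-- The canonical projection `B_n → S_n` sending `σ_i` to the transposition `(i, i+1)`. -/
def braidPermHom (n : ℕ) : BraidGroup n →* Equiv.Perm (Fin n) :=
  PresentedGroup.toGroup
    (f := fun i : Fin (n - 1) =>
      Equiv.swap (⟨i.val, by have := i.isLt; omega⟩ : Fin n)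
        (⟨i.val + 1, by have := i.isLt; omega⟩ : Fin n))
    (by
      rintro r (⟨⟨i, hi⟩, ⟨j, hj⟩, hij, rfl⟩ | ⟨⟨i, hi⟩, ⟨j, hj⟩, hij, rfl⟩) <;>
        simp only [map_mul, map_inv, FreeGroup.lift_apply_of, mul_inv_eq_one]
      · subst hij
        exact swap_braid (by simp only [ne_eq, Fin.mk.injEq, Fin.val_mk]; omega)
          (by simp only [ne_eq, Fin.mk.injEq, Fin.val_mk]; omega)
          (by simp only [ne_eq, Fin.mk.injEq, Fin.val_mk]; omega)
      · simp only [Fin.val_mk] at hij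
        exact (swap_commute (by simp only [ne_eq, Fin.mk.injEq, Fin.val_mk]; omega)
          (by simp only [ne_eq, Fin.mk.injEq, Fin.val_mk]; omega)
          (by simp only [ne_eq, Fin.mk.injEq, Fin.val_mk]; omega)
          (by simp only [ne_eq, Fin.mk.injEq, Fin.val_mk]; omega)).eq)

/-- The Birman–Ko–Lee element `δ_(n) = σ_1 σ_2 ⋯ σ_{n-1} ∈ B_n`. -/
def braidDelta (n : ℕ) : BraidGroup n :=
  ((List.range (n - 1)).map (fun j => braidGen n (j + 1))).prod

/-- The element `γ_(n) = σ_1 σ_2 ⋯ σ_{n-1} σ_1 ∈ B_n`. -/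
def braidGamma (n : ℕ) : BraidGroup n := braidDelta n * braidGen n 1

/-- Garside's half twist `Δ = (σ_1)(σ_2 σ_1) ⋯ (σ_{n-1} σ_{n-2} ⋯ σ_1) ∈ B_n`. -/
def halfTwist (n : ℕ) : BraidGroup n :=
  ((List.range (n - 1)).map
    (fun r => (((List.range (r + 1)).reverse).map (fun j => braidGen n (j + 1))).prod)).prod

/-- A braid is periodic if some positive power of it is a power of the full twist `Δ²`. -/
def IsPeriodicBraid {n : ℕ} (β : BraidGroup n) : Prop :=
  ∃ m : ℕ, 1 ≤ m ∧ ∃ l : ℤ, β ^ m = halfTwist n ^ (2 * l)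

/-- The pure braid group on `n` strands: the kernel of the projection `B_n → S_n`. -/
def pureBraidGroup (n : ℕ) : Subgroup (BraidGroup n) := (braidPermHom n).ker

/-- The annular braid group on `d` strands, identified with the subgroup of `B_{d+1}`
of braids whose permutation fixes the last strand. -/
def annularBraidGroup (d : ℕ) : Subgroup (BraidGroup (d + 1)) :=
  Subgroup.comap (braidPermHom (d + 1))
    (MulAction.stabilizer (Equiv.Perm (Fin (d + 1))) (Fin.last d))

/-- The mixed braid group associated to a partition (setoid) `P` of the strands:
braids whose permutation preserves each block of `P`. -/
def mixedBraidGroup {k : ℕ} (P : Setoid (Fin k)) : Subgroup (BraidGroup k) where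
  carrier := {α | ∀ x, P.r ((braidPermHom k α) x) x}
  one_mem' := by intro x; simp only [map_one, Equiv.Perm.coe_one, id_eq]; exact P.refl x
  mul_mem' := by
    intro a b ha hb x
    simp only [map_mul, Equiv.Perm.mul_apply]
    exact P.trans (ha ((braidPermHom k b) x)) (hb x)
  inv_mem' := by
    intro a ha x
    have := ha ((braidPermHom k a)⁻¹ x)
    simp only [map_inv] at *
    simpa using P.symm this

/-!
Take the band generator `a_ij` (a conjugate of `σ_i` with permutation `(i j)`) for each pair
`i < j` of strands in the same block and the pure generator `A_ij = a_ij²` for each pair in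
different blocks. The permutation of a braid `β ∈ B_𝒫` is a product of transpositions within
blocks, so some `γ` in the generated subgroup has the same permutation, and `β γ⁻¹` is pure. The
`A_ij` generate the pure braid group: their closure `H` is normal (conjugating `A_ij` by `σ_t`
gives another `A_kl`, possibly up to conjugation by `σ_t² = A_{t,t+1}`), and `B_n ⧸ H` is
generated by involutions satisfying the Coxeter relations of `S_n`, so it has at most `n!`
elements; as it surjects onto `S_n`, `H` is the kernel of `π`.
-/

open Subgroup

section CoxeterA

variable {G : Type*} [Group G] {q : ℕ → G} {N : ℕ}

structure IsBraidFamily (q : ℕ → G) (N : ℕ) : Prop where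
  braid : ∀ i, i + 1 < N → q i * q (i + 1) * q i = q (i + 1) * q i * q (i + 1)
  commute : ∀ i j, i + 2 ≤ j → j < N → Commute (q i) (q j)

/-- The Coxeter relations of the adjacent transpositions `(i i+1)`, `i < N`, of `S_{N+1}`. -/
structure IsCoxeterA (q : ℕ → G) (N : ℕ) : Prop extends IsBraidFamily q N where
  mul_self : ∀ i < N, q i * q i = 1

def ascProd (q : ℕ → G) (a len : ℕ) : G := ((List.range' a len).map q).prod

@[simp] lemma ascProd_zero (a : ℕ) : ascProd q a 0 = 1 := rfl

lemma ascProd_succ (a len : ℕ) : ascProd q a (len + 1) = q a * ascProd q (a + 1) len := by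
  simp [ascProd, List.range'_succ]

lemma ascProd_succ' (a len : ℕ) : ascProd q a (len + 1) = ascProd q a len * q (a + len) := by
  simp [ascProd, List.range'_concat]

lemma IsBraidFamily.commute_ascProd (hq : IsBraidFamily q N) {t a len : ℕ}
    (hta : t + 2 ≤ a ∨ a + len + 1 ≤ t) (ht : t < N) (hN : a + len ≤ N) :
    Commute (q t) (ascProd q a len) :=
  Commute.list_prod_right _ _ fun x hx => by
    obtain ⟨i, hi, rfl⟩ := List.mem_map.1 hx
    rw [List.mem_range'_1] at hi
    rcases hta with hta | hta
    · exact hq.commute t i (by omega) (by omega)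
    · exact (hq.commute i t (by omega) ht).symm

lemma IsBraidFamily.mul_ascProd (hq : IsBraidFamily q N) {u a len : ℕ} (hau : a ≤ u)
    (hu : u + 1 < a + len) (hN : a + len ≤ N) :
    q (u + 1) * ascProd q a len = ascProd q a len * q u := by
  induction len generalizing a with
  | zero => omega
  | succ len ih =>
    rw [ascProd_succ]
    rcases hau.eq_or_lt with rfl | hau
    · obtain ⟨l, rfl⟩ : ∃ l, len = l + 1 := ⟨len - 1, by omega⟩
      have hR := hq.commute_ascProd (t := a) (a := a + 2) (len := l) (.inl le_rfl) (by omega)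
        (by omega)
      rw [ascProd_succ, ← mul_assoc, ← mul_assoc, ← hq.braid a (by omega), mul_assoc,
        mul_assoc, mul_assoc, hR.eq]
      simp only [mul_assoc]
    · rw [← mul_assoc, (hq.commute a (u + 1) (by omega) (by omega)).symm.eq, mul_assoc,
        ih (by omega) (by omega) (by omega), mul_assoc]

lemma IsCoxeterA.mul_ascProd_mem (hq : IsCoxeterA q N) {m t a : ℕ} (hm : m + 1 ≤ N)
    (ht : t ≤ m) (ha : a ≤ m + 1) :
    ∃ b ≤ m + 1, ∃ k ∈ closure (q '' Set.Iio m),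
      q t * ascProd q a (m + 1 - a) = ascProd q b (m + 1 - b) * k := by
  rcases (by omega : t + 2 ≤ a ∨ t + 1 = a ∨ t = a ∨ a < t) with h | rfl | rfl | h
  · exact ⟨a, ha, q t, subset_closure ⟨t, by simp; omega, rfl⟩,
      (hq.commute_ascProd (.inl h) (by omega) (by omega)).eq⟩
  · refine ⟨t, by omega, 1, one_mem _, ?_⟩
    rw [mul_one, show m + 1 - t = m + 1 - (t + 1) + 1 by omega, ascProd_succ]
  · refine ⟨t + 1, by omega, 1, one_mem _, ?_⟩
    rw [mul_one, show m + 1 - t = m + 1 - (t + 1) + 1 by omega, ascProd_succ, ← mul_assoc,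
      hq.mul_self t (by omega), one_mul]
  · obtain ⟨u, rfl⟩ : ∃ u, t = u + 1 := ⟨t - 1, by omega⟩
    exact ⟨a, ha, q u, subset_closure ⟨u, by simp; omega, rfl⟩,
      hq.mul_ascProd (by omega) (by omega) (by omega)⟩

lemma IsCoxeterA.exists_eq_ascProd_mul (hq : IsCoxeterA q N) {m : ℕ} (hm : m + 1 ≤ N)
    {g : G} (hg : g ∈ closure (q '' Set.Iio (m + 1))) :
    ∃ a ≤ m + 1, ∃ k ∈ closure (q '' Set.Iio m), g = ascProd q a (m + 1 - a) * k := by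
  have step : ∀ x ∈ q '' Set.Iio (m + 1), ∀ y : G,
      (∃ a ≤ m + 1, ∃ k ∈ closure (q '' Set.Iio m), y = ascProd q a (m + 1 - a) * k) →
      ∃ a ≤ m + 1, ∃ k ∈ closure (q '' Set.Iio m), x * y = ascProd q a (m + 1 - a) * k := by
    rintro _ ⟨t, ht, rfl⟩ _ ⟨a, ha, k, hk, rfl⟩
    obtain ⟨b, hb, k', hk', hmul⟩ := hq.mul_ascProd_mem hm (Nat.lt_succ_iff.1 ht) ha
    exact ⟨b, hb, k' * k, mul_mem hk' hk, by rw [← mul_assoc, hmul, mul_assoc]⟩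
  induction hg using closure_induction_left with
  | one => exact ⟨m + 1, le_rfl, 1, one_mem _, by simp⟩
  | mul_left x hx y _ ih => exact step x hx y ih
  | inv_mul_cancel x hx y _ ih =>
    obtain ⟨t, ht, rfl⟩ := hx
    rw [inv_eq_of_mul_eq_one_right (hq.mul_self t (by simp at ht; omega))]
    exact step _ ⟨t, ht, rfl⟩ y ih

/-- By `exists_eq_ascProd_mul`, `⟨q 0, …, q m⟩` is covered by `m + 2` left cosets of
`⟨q 0, …, q (m - 1)⟩`, just as `S_{m+2}` by the cosets of `S_{m+1}`. -/
lemma IsCoxeterA.exists_finset_card_le (hq : IsCoxeterA q N) {m : ℕ} (hm : m ≤ N) :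
    ∃ T : Finset G, T.card ≤ (m + 1).factorial ∧ (closure (q '' Set.Iio m) : Set G) ⊆ T := by
  classical
  induction m with
  | zero => exact ⟨{1}, by simp, by simp⟩
  | succ m ih =>
    obtain ⟨T, hT, hsub⟩ := ih (by omega)
    refine ⟨(Finset.range (m + 2) ×ˢ T).image fun p => ascProd q p.1 (m + 1 - p.1) * p.2,
      ?_, fun g hg => ?_⟩
    · calc _ ≤ (Finset.range (m + 2) ×ˢ T).card := Finset.card_image_le
        _ ≤ (m + 2) * (m + 1).factorial := by
          rw [Finset.card_product, Finset.card_range]; exact Nat.mul_le_mul_left _ hT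
        _ = (m + 2).factorial := (Nat.factorial_succ _).symm
    · obtain ⟨a, ha, k, hk, rfl⟩ := hq.exists_eq_ascProd_mul hm hg
      exact Finset.mem_image.2 ⟨(a, k), Finset.mem_product.2
        ⟨Finset.mem_range.2 (by omega), hsub hk⟩, rfl⟩

theorem IsCoxeterA.finite_and_card_le_of_closure_eq_top (hq : IsCoxeterA q N)
    (htop : closure (q '' Set.Iio N) = ⊤) : Finite G ∧ Nat.card G ≤ (N + 1).factorial := by
  obtain ⟨T, hT, hsub⟩ := hq.exists_finset_card_le le_rfl
  rw [htop, coe_top] at hsub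
  have hfin : Finite G := Set.finite_univ_iff.1 (T.finite_toSet.subset hsub)
  refine ⟨hfin, ?_⟩
  calc Nat.card G = (Set.univ : Set G).ncard := Set.ncard_univ G |>.symm
    _ ≤ (T : Set G).ncard := Set.ncard_le_ncard hsub T.finite_toSet
    _ ≤ _ := by rwa [Set.ncard_coe_finset]

end CoxeterA

lemma inv_mul_mul_eq_of_braid {G : Type*} [Group G] {a b : G} (h : a * b * a = b * a * b) :
    b⁻¹ * a * b = a * b * a⁻¹ := by
  rw [eq_mul_inv_iff_mul_eq, mul_assoc, mul_assoc, inv_mul_eq_iff_eq_mul, ← mul_assoc,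
    ← mul_assoc, h]

lemma conj_mem_iff_conj_inv_mem_of_sq_mem {G : Type*} [Group G] {H : Subgroup G} {s : G}
    (hs : s ^ 2 ∈ H) (x : G) : s * x * s⁻¹ ∈ H ↔ s⁻¹ * x * s ∈ H := by
  constructor <;> intro hx
  · convert mul_mem (mul_mem (inv_mem hs) hx) hs using 1; group
  · convert mul_mem (mul_mem hs hx) (inv_mem hs) using 1; group

lemma mem_normalizer_closure_of_sq_mem {G : Type*} [Group G] {S : Set G} {s : G}
    (hs : s ^ 2 ∈ closure S)
    (h : ∀ x ∈ S, s * x * s⁻¹ ∈ closure S ∨ s⁻¹ * x * s ∈ closure S) :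
    s ∈ normalizer (closure S : Set G) := by
  have hconj : closure S ≤ (closure S).comap (MulAut.conj s).toMonoidHom :=
    (closure_le _).2 fun x hx => by
      simpa using (h x hx).elim id (conj_mem_iff_conj_inv_mem_of_sq_mem hs x).2
  refine mem_normalizer_iff.2 fun x => ⟨fun hx => by simpa using hconj hx, fun hx => ?_⟩
  convert (conj_mem_iff_conj_inv_mem_of_sq_mem hs _).1 (hconj hx) using 1
  simp [mul_assoc]

namespace BraidGroup

variable {n : ℕ}

/-- The Artin generator `σ_{i+1}` (indexed from `0`), with junk value `1` when `n - 1 ≤ i`. -/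
def σ (n i : ℕ) : BraidGroup n := if h : i < n - 1 then PresentedGroup.of ⟨i, h⟩ else 1

lemma σ_of_lt {i : ℕ} (h : i < n - 1) : σ n i = PresentedGroup.of ⟨i, h⟩ := dif_pos h

lemma σ_of_le {i : ℕ} (h : n - 1 ≤ i) : σ n i = 1 := dif_neg (by omega)

lemma isBraidFamily_σ (n : ℕ) : IsBraidFamily (σ n) (n - 1) where
  braid i hi := by
    have hrel := PresentedGroup.one_of_mem (rels := braidRels n)
      (Or.inl ⟨⟨i, by omega⟩, ⟨i + 1, hi⟩, rfl, rfl⟩)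
    simp only [map_mul, map_inv, mul_inv_eq_one] at hrel
    rwa [σ_of_lt (by omega), σ_of_lt hi]
  commute i j hij hj := by
    have hrel := PresentedGroup.one_of_mem (rels := braidRels n)
      (Or.inr ⟨⟨i, by omega⟩, ⟨j, hj⟩, hij, rfl⟩)
    simp only [map_mul, map_inv, mul_inv_eq_one] at hrel
    rw [σ_of_lt (by omega), σ_of_lt hj]
    exact hrel

lemma closure_σ_eq_top (n : ℕ) : closure (σ n '' Set.Iio (n - 1)) = ⊤ := by
  refine eq_top_iff.2 fun g _ => ?_
  have hg : g ∈ closure (Set.range (PresentedGroup.of (rels := braidRels n))) := by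
    rw [PresentedGroup.closure_range_of]; trivial
  refine (closure_le _).2 ?_ hg
  rintro _ ⟨⟨i, hi⟩, rfl⟩
  exact subset_closure ⟨i, hi, σ_of_lt hi⟩

lemma braidPermHom_σ {i : ℕ} (h : i < n - 1) :
    braidPermHom n (σ n i) = Equiv.swap ⟨i, by omega⟩ ⟨i + 1, by omega⟩ := by
  rw [σ_of_lt h]
  exact PresentedGroup.toGroup.of _

/-- The band generator `a_{ij}`, for strands `i < j` indexed from `0`. -/
def band (n i j : ℕ) : BraidGroup n :=
  (ascProd (σ n) (i + 1) (j - (i + 1)))⁻¹ * σ n i * ascProd (σ n) (i + 1) (j - (i + 1))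

def pureGen (n i j : ℕ) : BraidGroup n := band n i j ^ 2

lemma band_succ (i : ℕ) : band n i (i + 1) = σ n i := by
  simp [band]

lemma band_succ_right {i j : ℕ} (hij : i < j) :
    band n i (j + 1) = (σ n j)⁻¹ * band n i j * σ n j := by
  rw [band, band, show j + 1 - (i + 1) = j - (i + 1) + 1 by omega, ascProd_succ',
    show i + 1 + (j - (i + 1)) = j by omega]
  group

lemma band_eq_conj_band_succ_left {i j : ℕ} (hij : i + 1 < j) (hj : j < n) :
    band n i j = σ n i * band n (i + 1) j * (σ n i)⁻¹ := by
  have hq := isBraidFamily_σ n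
  set v := ascProd (σ n) (i + 2) (j - (i + 2))
  have hv : Commute (σ n i) v := hq.commute_ascProd (.inl le_rfl) (by omega) (by omega)
  have hbraid := inv_mul_mul_eq_of_braid (hq.braid i (by omega))
  rw [band, band, show j - (i + 1) = j - (i + 2) + 1 by omega, ascProd_succ]
  calc (σ n (i + 1) * v)⁻¹ * σ n i * (σ n (i + 1) * v)
      = v⁻¹ * ((σ n (i + 1))⁻¹ * σ n i * σ n (i + 1)) * v := by group
    _ = (v⁻¹ * σ n i) * σ n (i + 1) * ((σ n i)⁻¹ * v) := by rw [hbraid]; group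
    _ = (σ n i * v⁻¹) * σ n (i + 1) * (v * (σ n i)⁻¹) := by
      rw [hv.inv_right.eq, hv.inv_left.eq]
    _ = σ n i * (v⁻¹ * σ n (i + 1) * v) * (σ n i)⁻¹ := by group

lemma braidPermHom_band {i j : ℕ} (hij : i < j) (hj : j < n) :
    braidPermHom n (band n i j) = Equiv.swap ⟨i, by omega⟩ ⟨j, hj⟩ := by
  induction j, hij using Nat.le_induction with
  | base => rw [band_succ, braidPermHom_σ (by omega)]
  | succ j hij ih =>
    rw [band_succ_right hij, map_mul, map_mul, map_inv, ih (by omega),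
      braidPermHom_σ (by omega), Equiv.swap_inv,
      Equiv.swap_mul_swap_mul_swap (by simp [Fin.ext_iff]; omega)
        (by simp [Fin.ext_iff]; omega), Equiv.swap_comm]

lemma commute_σ_band_of_disjoint {t i j : ℕ} (hij : i < j) (hj : j < n)
    (ht : t + 2 ≤ i ∨ j + 1 ≤ t) : Commute (σ n t) (band n i j) := by
  rcases lt_or_ge t (n - 1) with htn | htn
  · have hq := isBraidFamily_σ n
    have hv : Commute (σ n t) (ascProd (σ n) (i + 1) (j - (i + 1))) :=
      hq.commute_ascProd (by omega) htn (by omega)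
    have hi : Commute (σ n t) (σ n i) := by
      rcases ht with ht | ht
      · exact hq.commute t i ht (by omega)
      · exact (hq.commute i t (by omega) htn).symm
    exact (hv.inv_right.mul_right hi).mul_right hv
  · rw [σ_of_le htn]
    exact Commute.one_left _

lemma commute_σ_band_of_between {t i j : ℕ} (hj : j < n) (hit : i < t) (htj : t + 1 < j) :
    Commute (σ n t) (band n i j) := by
  have hq := isBraidFamily_σ n
  set v := ascProd (σ n) (i + 1) (j - (i + 1))
  have hv : σ n (t + 1) * v = v * σ n t := hq.mul_ascProd (by omega) (by omega) (by omega)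
  have hv' : σ n t * v⁻¹ = v⁻¹ * σ n (t + 1) := by
    rw [mul_inv_eq_iff_eq_mul, mul_assoc, hv, inv_mul_cancel_left]
  have hi : Commute (σ n i) (σ n (t + 1)) := hq.commute i (t + 1) (by omega) (by omega)
  calc σ n t * (v⁻¹ * σ n i * v) = v⁻¹ * (σ n (t + 1) * σ n i) * v := by
        rw [← mul_assoc, ← mul_assoc, hv']; group
    _ = v⁻¹ * σ n i * v * σ n t := by rw [← hi.eq, mul_assoc, mul_assoc, hv]; group

lemma pureGen_succ_right {i j : ℕ} (hij : i < j) :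
    pureGen n i (j + 1) = (σ n j)⁻¹ * pureGen n i j * σ n j := by
  rw [pureGen, pureGen, band_succ_right hij, sq, sq]; group

lemma pureGen_eq_conj_left {i j : ℕ} (hij : i + 1 < j) (hj : j < n) :
    pureGen n i j = σ n i * pureGen n (i + 1) j * (σ n i)⁻¹ := by
  rw [pureGen, pureGen, band_eq_conj_band_succ_left hij hj, conj_pow]

lemma pureGen_succ (i : ℕ) : pureGen n i (i + 1) = σ n i ^ 2 := by
  rw [pureGen, band_succ]

def pureGens (n : ℕ) : Set (BraidGroup n) := {x | ∃ i j, i < j ∧ j < n ∧ x = pureGen n i j}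

lemma pureGen_mem_closure {i j : ℕ} (hij : i < j) (hj : j < n) :
    pureGen n i j ∈ closure (pureGens n) :=
  subset_closure ⟨i, j, hij, hj, rfl⟩

lemma σ_sq_mem_closure_pureGens {t : ℕ} (ht : t < n - 1) : σ n t ^ 2 ∈ closure (pureGens n) :=
  pureGen_succ t ▸ pureGen_mem_closure (by omega) (by omega)

lemma conj_σ_pureGen_mem {t i j : ℕ} (hij : i < j) (hj : j < n) (ht : t < n - 1) :
    σ n t * pureGen n i j * (σ n t)⁻¹ ∈ closure (pureGens n) ∨
      (σ n t)⁻¹ * pureGen n i j * σ n t ∈ closure (pureGens n) := by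
  have of_commute (h : Commute (σ n t) (band n i j)) :
      σ n t * pureGen n i j * (σ n t)⁻¹ ∈ closure (pureGens n) := by
    rw [pureGen, (h.pow_right 2).eq, mul_inv_cancel_right]
    exact pureGen_mem_closure hij hj
  rcases (by omega : t + 2 ≤ i ∨ j + 1 ≤ t ∨ (i < t ∧ t + 1 < j) ∨ (t = i ∧ j = i + 1) ∨
    (t = i ∧ i + 1 < j) ∨ t + 1 = i ∨ t = j ∨ (i < t ∧ t + 1 = j)) with
    h | h | ⟨h, h'⟩ | ⟨rfl, rfl⟩ | ⟨rfl, h⟩ | rfl | rfl | ⟨h, rfl⟩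
  · exact .inl (of_commute (commute_σ_band_of_disjoint hij hj (.inl h)))
  · exact .inl (of_commute (commute_σ_band_of_disjoint hij hj (.inr h)))
  · exact .inl (of_commute (commute_σ_band_of_between hj h h'))
  · exact .inl (of_commute (band_succ t ▸ Commute.refl _))
  · right
    rw [pureGen_eq_conj_left h hj]
    simpa [mul_assoc] using pureGen_mem_closure h hj
  · left
    rw [← pureGen_eq_conj_left (by omega) hj]
    exact pureGen_mem_closure (by omega) hj
  · right
    rw [← pureGen_succ_right hij]
    exact pureGen_mem_closure (by omega) (by omega)
  · left
    rw [pureGen_succ_right h]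
    simpa [mul_assoc] using pureGen_mem_closure h (by omega)

instance normal_closure_pureGens (n : ℕ) : (closure (pureGens n)).Normal := by
  rw [← normalizer_eq_top_iff, eq_top_iff, ← closure_σ_eq_top, closure_le]
  rintro _ ⟨t, ht, rfl⟩
  refine mem_normalizer_closure_of_sq_mem (σ_sq_mem_closure_pureGens ht) ?_
  rintro _ ⟨i, j, hij, hj, rfl⟩
  exact conj_σ_pureGen_mem hij hj ht

lemma closure_pureGens_le_pureBraidGroup (n : ℕ) : closure (pureGens n) ≤ pureBraidGroup n := by
  rw [closure_le]
  rintro _ ⟨i, j, hij, hj, rfl⟩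
  rw [SetLike.mem_coe, pureBraidGroup, MonoidHom.mem_ker, pureGen, map_pow,
    braidPermHom_band hij hj, sq, Equiv.swap_mul_self]

lemma isCoxeterA_mk_σ (n : ℕ) :
    IsCoxeterA (fun i => (σ n i : BraidGroup n ⧸ closure (pureGens n))) (n - 1) where
  braid i hi := by simp only [← QuotientGroup.mk_mul, (isBraidFamily_σ n).braid i hi]
  commute i j hij hj := ((isBraidFamily_σ n).commute i j hij hj).map (QuotientGroup.mk' _)
  mul_self i hi := by
    rw [← QuotientGroup.mk_mul, QuotientGroup.eq_one_iff, ← sq]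
    exact σ_sq_mem_closure_pureGens hi

lemma braidPermHom_surjective (n : ℕ) : Function.Surjective (braidPermHom n) := by
  rw [← MonoidHom.range_eq_top, eq_top_iff, ← Equiv.Perm.closure_isSwap, closure_le]
  rintro _ ⟨x, y, hxy, rfl⟩
  wlog h : x < y generalizing x y
  · rw [Equiv.swap_comm]
    exact this y x hxy.symm (lt_of_le_of_ne (not_lt.1 h) hxy.symm)
  exact ⟨band n x y, braidPermHom_band h y.2⟩

theorem closure_pureGens_eq_pureBraidGroup (n : ℕ) : closure (pureGens n) = pureBraidGroup n := by
  refine le_antisymm (closure_pureGens_le_pureBraidGroup n) fun β hβ => ?_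
  set H := closure (pureGens n)
  have htop : closure ((fun i => (σ n i : BraidGroup n ⧸ H)) '' Set.Iio (n - 1)) = ⊤ := by
    rw [show (fun i => (σ n i : BraidGroup n ⧸ H)) = QuotientGroup.mk' H ∘ σ n from rfl,
      Set.image_comp, ← MonoidHom.map_closure, closure_σ_eq_top,
      map_top_of_surjective _ (QuotientGroup.mk'_surjective H)]
  obtain ⟨hfin, hcard⟩ := (isCoxeterA_mk_σ n).finite_and_card_le_of_closure_eq_top htop
  set f := QuotientGroup.lift H (braidPermHom n) (closure_pureGens_le_pureBraidGroup n)
  have hf : Function.Bijective f := by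
    refine Function.Surjective.bijective_of_nat_card_le ?_ ?_
    · intro τ
      obtain ⟨β, rfl⟩ := braidPermHom_surjective n τ
      exact ⟨β, QuotientGroup.lift_mk _ _ _⟩
    · rw [Nat.card_perm, Nat.card_fin]
      exact hcard.trans (by rcases n with _ | n <;> simp)
  rw [← QuotientGroup.eq_one_iff]
  exact hf.1 ((QuotientGroup.lift_mk _ _ β).trans (hβ.trans (map_one f).symm))

end BraidGroup

lemma Equiv.Perm.mem_closure_swap_of_forall_rel {α : Type*} [Finite α] [DecidableEq α]
    (r : Setoid α) {f : Equiv.Perm α} (hf : ∀ x, r (f x) x) :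
    f ∈ closure {g | ∃ x y, x ≠ y ∧ r x y ∧ g = Equiv.swap x y} := by
  refine (mem_closure_isSwap ?_).2 ⟨Set.toFinite _, fun x => ?_⟩
  · rintro _ ⟨x, y, hxy, -, rfl⟩
    exact ⟨x, y, hxy, rfl⟩
  rcases eq_or_ne (f x) x with hx | hx
  · rw [hx]
    exact MulAction.mem_orbit_self x
  · exact ⟨⟨Equiv.swap x (f x), subset_closure ⟨x, f x, hx.symm, r.symm (hf x), rfl⟩⟩,
      Equiv.swap_apply_left _ _⟩

namespace BraidGroup

variable {k : ℕ}

open Classical in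
noncomputable def mixedGen (P : Setoid (Fin k)) (p : Fin k × Fin k) : BraidGroup k :=
  if P.r p.1 p.2 then band k p.1 p.2 else pureGen k p.1 p.2

def mixedGens (P : Setoid (Fin k)) : Set (BraidGroup k) := mixedGen P '' {p | p.1 < p.2}

lemma mixedGen_mem {P : Setoid (Fin k)} {p : Fin k × Fin k} (hp : p.1 < p.2) :
    mixedGen P p ∈ mixedBraidGroup P := by
  intro x
  by_cases hr : P.r p.1 p.2
  · rw [mixedGen, if_pos hr, braidPermHom_band hp p.2.2, Equiv.swap_apply_def]
    split_ifs with h1 h2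
    · exact h1 ▸ P.symm hr
    · exact h2 ▸ hr
    · exact P.refl x
  · rw [mixedGen, if_neg hr, pureGen, map_pow, braidPermHom_band hp p.2.2, sq,
      Equiv.swap_mul_self]
    exact P.refl x

lemma pureBraidGroup_le_closure_mixedGens {P : Setoid (Fin k)} :
    pureBraidGroup k ≤ closure (mixedGens P) := by
  rw [← closure_pureGens_eq_pureBraidGroup, closure_le]
  rintro _ ⟨i, j, hij, hj, rfl⟩
  have hgen : mixedGen P (⟨i, by omega⟩, ⟨j, hj⟩) ∈ closure (mixedGens P) :=
    subset_closure ⟨_, hij, rfl⟩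
  by_cases hr : P.r ⟨i, by omega⟩ ⟨j, hj⟩
  · rw [mixedGen, if_pos hr] at hgen
    exact pow_mem hgen 2
  · rwa [mixedGen, if_neg hr] at hgen

lemma swap_mem_map_closure_mixedGens {P : Setoid (Fin k)} {x y : Fin k} (hxy : x ≠ y)
    (hr : P.r x y) :
    Equiv.swap x y ∈ (closure (mixedGens P)).map (braidPermHom k) := by
  wlog h : x < y generalizing x y
  · rw [Equiv.swap_comm]
    exact this hxy.symm (P.symm hr) (lt_of_le_of_ne (not_lt.1 h) hxy.symm)
  refine ⟨band k x y, ?_, braidPermHom_band h y.2⟩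
  have : mixedGen P (x, y) = band k x y := if_pos hr
  exact this ▸ subset_closure ⟨_, h, rfl⟩

theorem closure_mixedGens (P : Setoid (Fin k)) : closure (mixedGens P) = mixedBraidGroup P := by
  refine le_antisymm ((closure_le _).2 ?_) fun β hβ => ?_
  · rintro _ ⟨p, hp, rfl⟩
    exact mixedGen_mem hp
  rw [← comap_map_eq_self pureBraidGroup_le_closure_mixedGens, mem_comap]
  refine (closure_le _).2 ?_ (Equiv.Perm.mem_closure_swap_of_forall_rel P hβ)
  rintro _ ⟨x, y, hxy, hr, rfl⟩
  exact swap_mem_map_closure_mixedGens hxy hr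

lemma ncard_mixedGens_le (P : Setoid (Fin k)) : (mixedGens P).ncard ≤ k * (k - 1) / 2 := by
  classical
  calc (mixedGens P).ncard ≤ {p : Fin k × Fin k | p.1 < p.2}.ncard := Set.ncard_image_le
    _ = k * (k - 1) / 2 := by
      rw [Set.ncard_eq_toFinset_card', Set.toFinset_ofPred, Fintype.card_product_filter_lt,
        Fintype.card_fin, Nat.choose_two_right]

end BraidGroup

open BraidGroup in
theorem mixedBraidGroup_small_generating_set_general (k : ℕ) (P : Setoid (Fin k)) :
    ∃ S : Set (BraidGroup k),
      S ⊆ ↑(mixedBraidGroup P) ∧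
      Subgroup.closure S = mixedBraidGroup P ∧
      S.Finite ∧ S.ncard ≤ k * (k - 1) / 2 :=
  ⟨mixedGens P, closure_mixedGens P ▸ subset_closure, closure_mixedGens P,
    (Set.toFinite _).image _, ncard_mixedGens_le P⟩

/-- For any partition `P` of the `k` strands, the mixed braid group `B_P`
can be generated by at most `k(k-1)/2` elements. -/
theorem mixedBraidGroup_small_generating_set (k : ℕ) (hk : 1 ≤ k) (P : Setoid (Fin k)) :
    ∃ S : Set (BraidGroup k),
      S ⊆ ↑(mixedBraidGroup P) ∧
      Subgroup.closure S = mixedBraidGroup P ∧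
      S.Finite ∧ S.ncard ≤ k * (k - 1) / 2 :=
  mixedBraidGroup_small_generating_set_general k P
end

section
/- The direct product group B_3 × ℤ is generated by the two elements (σ_1σ_2, t) and (σ_1σ_2σ_1, t), where t denotes a generator of ℤ. In particular, B_3 × ℤ can be generated by two elements. -/
open Subgroup

theorem Multiplicative.zpowers_ofAdd_one : zpowers (Multiplicative.ofAdd (1 : ℤ)) = ⊤ :=
  eq_top_iff.2 fun z _ => ⟨z.toAdd, by simp [← ofAdd_zsmul]⟩

theorem Subgroup.closure_pair_mul_mul_mul {G : Type*} [Group G] (a b : G) :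
    closure {a * b, a * b * a} = closure {a, b} := by
  apply le_antisymm <;> rw [closure_le]
  · have ha : a ∈ closure {a, b} := subset_closure (by simp)
    have hb : b ∈ closure {a, b} := subset_closure (by simp)
    rintro _ (rfl | rfl)
    exacts [mul_mem ha hb, mul_mem (mul_mem ha hb) ha]
  · have hab : a * b ∈ closure {a * b, a * b * a} := subset_closure (by simp)
    have haba : a * b * a ∈ closure {a * b, a * b * a} := subset_closure (by simp)
    have ha : a ∈ closure {a * b, a * b * a} := by
      simpa [mul_assoc] using mul_mem (inv_mem hab) haba
    rintro _ (rfl | rfl)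
    exacts [ha, by simpa using mul_mem (inv_mem ha) hab]

theorem Subgroup.closure_prod_pair_eq_top {G K : Type*} [Group G] [Group K] {x y : G} {t : K}
    {n : ℕ} (hxy : x ^ (n + 1) = y ^ n) (hG : closure {x, y} = ⊤) (hK : zpowers t = ⊤) :
    closure {(x, t), (y, t)} = ⊤ := by
  set H := closure {(x, t), (y, t)}
  have hxt : (x, t) ∈ H := subset_closure (by simp)
  have hyt : (y, t) ∈ H := subset_closure (by simp)
  have ht : ((1 : G), t) ∈ H := by
    have hpow : (x, t) ^ (n + 1) * ((y, t) ^ n)⁻¹ = ((1 : G), t) := by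
      simp [← hxy, pow_succ']
    exact hpow ▸ mul_mem (pow_mem hxt _) (inv_mem (pow_mem hyt _))
  have hGH : closure {x, y} ≤ H.comap (MonoidHom.inl G K) := by
    rw [closure_le]
    rintro _ (rfl | rfl)
    · simpa using mul_mem hxt (inv_mem ht)
    · simpa using mul_mem hyt (inv_mem ht)
  have hKH : zpowers t ≤ H.comap (MonoidHom.inr G K) := zpowers_le.2 ht
  refine eq_top_iff.2 fun ⟨g, k⟩ _ => ?_
  have hgk : ((g, k) : G × K) = MonoidHom.inl G K g * MonoidHom.inr G K k := by simp
  exact hgk ▸ mul_mem (hGH (hG.ge (mem_top g))) (hKH (hK.ge (mem_top k)))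

theorem mul_pow_three_eq_sq_of_braid {G : Type*} [Group G] {a b : G}
    (h : a * b * a = b * a * b) :
    (a * b) ^ 3 = (a * b * a) ^ 2 := by
  calc (a * b) ^ 3 = (a * b * a) * (b * a * b) := by
        simp only [pow_succ, pow_zero, one_mul, mul_assoc]
    _ = (a * b * a) ^ 2 := by rw [← h, sq]

theorem braidGen_eq_of {n i : ℕ} (h : i - 1 < n - 1) :
    braidGen n i = PresentedGroup.of ⟨i - 1, h⟩ :=
  dif_pos h

theorem braidGen_three_braid_rel :
    braidGen 3 1 * braidGen 3 2 * braidGen 3 1 = braidGen 3 2 * braidGen 3 1 * braidGen 3 2 := by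
  rw [braidGen_eq_of (by norm_num), braidGen_eq_of (by norm_num)]
  exact PresentedGroup.mk_eq_mk_of_mul_inv_mem (Or.inl ⟨0, 1, rfl, rfl⟩)

theorem closure_braidGen_three_eq_top : closure {braidGen 3 1, braidGen 3 2} = ⊤ := by
  have hgen :
      @closure (BraidGroup 3) _ (Set.range (PresentedGroup.of (rels := braidRels 3))) = ⊤ :=
    PresentedGroup.closure_range_of _
  refine eq_top_iff.2 (hgen.ge.trans ?_)
  rw [closure_le]
  rintro _ ⟨i, rfl⟩
  fin_cases i
  · exact Subgroup.subset_closure (Or.inl (braidGen_eq_of (n := 3) (i := 1) (by norm_num)).symm)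
  · exact Subgroup.subset_closure (Or.inr (braidGen_eq_of (n := 3) (i := 2) (by norm_num)).symm)

/-- `B_3 × ℤ` is generated by the two elements `(σ_1 σ_2, t)` and
`(σ_1 σ_2 σ_1, t)`. -/
theorem b3_prod_int_two_generators :
    Subgroup.closure
      {((braidGen 3 1 * braidGen 3 2, Multiplicative.ofAdd (1 : ℤ)) :
          BraidGroup 3 × Multiplicative ℤ),
        ((braidGen 3 1 * braidGen 3 2 * braidGen 3 1, Multiplicative.ofAdd (1 : ℤ)) :
          BraidGroup 3 × Multiplicative ℤ)} =
      (⊤ : Subgroup (BraidGroup 3 × Multiplicative ℤ)) :=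
  closure_prod_pair_eq_top (mul_pow_three_eq_sq_of_braid braidGen_three_braid_rel)
    ((closure_pair_mul_mul_mul _ _).trans closure_braidGen_three_eq_top)
    Multiplicative.zpowers_ofAdd_one
end
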